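/- For a positive long root α, let x_α ∈ X_Ĩ be the unique minimal coset representative with x_α(α̃) = α. Then x_{−α} = s_α x_α and l(x_{−α}) = l(s_α) + l(x_α). -/

import Mathlib

open scoped RealInnerProductSpace

variable {V : Type*} [NormedAddCommGroup V] [InnerProductSpace ℝ V]

/-- An irreducible reduced (crystallographic) root system in a real inner product space. -/
structure IsIrredRootSystem (Φ : Set V) : Prop where
  finite : Φ.Finite
  nonempty : Φ.Nonempty
  nonzero : (0 : V) ∉ Φ
  spanning : Submodule.span ℝ Φ = ⊤
  reflect_mem : ∀ α ∈ Φ, ∀ β ∈ Φ, β - (2 * ⟪α, β⟫ / ⟪α, α⟫) • α ∈ Φ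
  crystallographic : ∀ α ∈ Φ, ∀ β ∈ Φ, ∃ n : ℤ, 2 * ⟪α, β⟫ / ⟪α, α⟫ = (n : ℝ)
  reduced : ∀ α ∈ Φ, ∀ t : ℝ, t • α ∈ Φ → t = 1 ∨ t = -1
  irreducible : ∀ Φ₁ Φ₂ : Set V, Φ₁ ∪ Φ₂ = Φ →
    (∀ α ∈ Φ₁, ∀ β ∈ Φ₂, ⟪α, β⟫ = 0) → Φ₁ = ∅ ∨ Φ₂ = ∅

/-- `Δ` is a base (system of simple roots) for `Φ`: it is contained in `Φ`, linearly
independent, and every root is an integral combination of `Δ` with coefficients all of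
the same sign. -/
def IsBase (Φ : Set V) (Δ : Finset V) : Prop :=
  (Δ : Set V) ⊆ Φ ∧ LinearIndependent ℝ (fun a : Δ => (a : V)) ∧
    ∀ γ ∈ Φ, ∃ c : V → ℤ, γ = ∑ α ∈ Δ, (c α : ℝ) • α ∧
      ((∀ α ∈ Δ, 0 ≤ c α) ∨ (∀ α ∈ Δ, c α ≤ 0))

/-- The positive roots with respect to the base `Δ`. -/
def posRoots (Φ : Set V) (Δ : Finset V) : Set V :=
  {γ ∈ Φ | ∃ c : V → ℕ, γ = ∑ α ∈ Δ, (c α : ℝ) • α}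

/-- The coroot `γ^∨ = 2γ/(γ|γ)` of a root `γ`. -/
noncomputable def coroot (γ : V) : V := (2 / ⟪γ, γ⟫) • γ

/-- The set of reflections in the roots of `Φ`, as linear automorphisms of `V`. -/
def reflections (Φ : Set V) : Set (V ≃ₗ[ℝ] V) :=
  {w | ∃ α ∈ Φ, ∀ v, w v = v - (2 * ⟪α, v⟫ / ⟪α, α⟫) • α}

/-- The Weyl group of `Φ`: the group generated by the reflections in the roots. -/
def weylGroup (Φ : Set V) : Subgroup (V ≃ₗ[ℝ] V) := Subgroup.closure (reflections Φ)

/-- The simple reflections with respect to the base `Δ`. -/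
def simpleReflections (Δ : Finset V) : Set (V ≃ₗ[ℝ] V) :=
  {w | ∃ α ∈ Δ, ∀ v, w v = v - (2 * ⟪α, v⟫ / ⟪α, α⟫) • α}

/-- The length of `w` with respect to the simple reflections determined by `Δ`. -/
noncomputable def len (Δ : Finset V) (w : V ≃ₗ[ℝ] V) : ℕ :=
  sInf {n | ∃ L : List (V ≃ₗ[ℝ] V),
    (∀ s ∈ L, s ∈ simpleReflections Δ) ∧ L.length = n ∧ L.prod = w}

/-- `t` is the highest root of `Φ` with respect to the base `Δ`. -/
def IsHighestRoot (Φ : Set V) (Δ : Finset V) (t : V) : Prop :=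
  t ∈ Φ ∧ ∀ α ∈ Φ, ∃ c : V → ℕ, t - α = ∑ a ∈ Δ, (c a : ℝ) • a

/-- The set `X_Ĩ` of minimal coset representatives of `W/W_Ĩ`, where `Ĩ` is the set of
simple roots orthogonal to the highest root `t`. -/
def minCosetReps (Φ : Set V) (Δ : Finset V) (t : V) : Set (V ≃ₗ[ℝ] V) :=
  {w | w ∈ weylGroup Φ ∧ ∀ γ ∈ Φ,
    (∃ c : V → ℕ, (∀ a ∈ Δ, ⟪t, a⟫ ≠ 0 → c a = 0) ∧ γ = ∑ a ∈ Δ, (c a : ℝ) • a) →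
      w γ ∈ posRoots Φ Δ}

/-!
Both `x_{-α}` and `s_α x_α` send `α̃` to `-α`, and `s_α x_α` is again a minimal coset
representative, since `s_α` fixes `x_α β` for every root `β` orthogonal to `α̃`. A minimal coset
representative is determined by its value at the dominant root `α̃`: if `u = w₁⁻¹ w₂` fixes `α̃`
and `u ≠ 1`, then `u a < 0` for some simple root `a`, so `(α̃, a) = (α̃, u a) ≤ 0` puts `a` and
`-u a` in the positive roots of `Ĩ`, and `w₁ (-u a) = -w₂ a` cannot be positive.

For the lengths, `l(w)` is the number of inversions of `w`, and these add up along `s_α x_α`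
because no inversion `δ` of `s_α` has `x_α⁻¹ δ < 0`: otherwise `(α, δ) = (α̃, x_α⁻¹ δ) ≤ 0`,
and then `s_α δ = δ - 2(α, δ)/(α, α) α` is positive.
-/

noncomputable def rootReflection (γ : V) : V ≃ₗ[ℝ] V :=
  LinearEquiv.ofInvolutive
    { toFun := fun v => v - (2 * ⟪γ, v⟫ / ⟪γ, γ⟫) • γ
      map_add' := fun u v => by
        simp only [inner_add_right, mul_add, add_div, add_smul]
        abel
      map_smul' := fun c v => by
        simp only [real_inner_smul_right, RingHom.id_apply, smul_sub, smul_smul]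
        ring_nf }
    fun v => by
      rcases eq_or_ne γ 0 with rfl | hγ
      · simp
      · have : ⟪γ, γ⟫ ≠ 0 := inner_self_ne_zero.mpr hγ
        simp only [LinearMap.coe_mk, AddHom.coe_mk, inner_sub_right, real_inner_smul_right]
        rw [sub_sub, ← add_smul]
        field_simp
        norm_num

lemma rootReflection_apply (γ v : V) :
    rootReflection γ v = v - (2 * ⟪γ, v⟫ / ⟪γ, γ⟫) • γ := rfl

lemma rootReflection_rootReflection (γ v : V) : rootReflection γ (rootReflection γ v) = v :=
  (rootReflection γ).symm_apply_apply v

lemma rootReflection_mul_self (γ : V) : rootReflection γ * rootReflection γ = 1 :=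
  LinearEquiv.ext (rootReflection_rootReflection γ)

lemma rootReflection_inv (γ : V) : (rootReflection γ)⁻¹ = rootReflection γ :=
  inv_eq_of_mul_eq_one_right (rootReflection_mul_self γ)

lemma rootReflection_self {γ : V} (hγ : γ ≠ 0) : rootReflection γ γ = -γ := by
  rw [rootReflection_apply, mul_div_assoc, div_self (inner_self_ne_zero.mpr hγ), mul_one,
    two_smul, sub_add_cancel_left]

lemma rootReflection_of_inner_eq_zero {γ v : V} (h : ⟪γ, v⟫ = 0) : rootReflection γ v = v := by
  simp [rootReflection_apply, h]

lemma rootReflection_neg (γ : V) : rootReflection (-γ) = rootReflection γ := by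
  ext v
  simp [rootReflection_apply, neg_div]

lemma inner_rootReflection_rootReflection (γ u v : V) :
    ⟪rootReflection γ u, rootReflection γ v⟫ = ⟪u, v⟫ := by
  rcases eq_or_ne γ 0 with rfl | hγ
  · simp [rootReflection_apply]
  · have : ⟪γ, γ⟫ ≠ 0 := inner_self_ne_zero.mpr hγ
    simp only [rootReflection_apply, inner_sub_left, inner_sub_right, real_inner_smul_left,
      real_inner_smul_right, real_inner_comm γ u]
    field_simp
    ring

lemma rootReflection_conj {w : V ≃ₗ[ℝ] V} (hw : ∀ u v, ⟪w u, w v⟫ = ⟪u, v⟫) (γ : V) :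
    rootReflection (w γ) = w * rootReflection γ * w⁻¹ := by
  ext v
  have hv : ⟪w γ, v⟫ = ⟪γ, w⁻¹ v⟫ := by
    simpa using hw γ (w⁻¹ v)
  simp only [rootReflection_apply, LinearEquiv.mul_apply, map_sub, map_smul, hv, hw γ γ,
    LinearEquiv.apply_symm_apply, LinearEquiv.coe_inv]

lemma IsIrredRootSystem.ne_zero {Φ : Set V} (hΦ : IsIrredRootSystem Φ) {γ : V} (hγ : γ ∈ Φ) :
    γ ≠ 0 :=
  fun h => hΦ.nonzero (h ▸ hγ)

section WeylGroup

variable {Φ : Set V}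

lemma mem_reflections_iff {w : V ≃ₗ[ℝ] V} : w ∈ reflections Φ ↔ ∃ γ ∈ Φ, w = rootReflection γ :=
  ⟨fun ⟨γ, hγ, h⟩ => ⟨γ, hγ, LinearEquiv.ext h⟩, fun ⟨γ, hγ, h⟩ => ⟨γ, hγ, h ▸ fun _ => rfl⟩⟩

lemma mem_simpleReflections_iff {Δ : Finset V} {w : V ≃ₗ[ℝ] V} :
    w ∈ simpleReflections Δ ↔ ∃ a ∈ Δ, w = rootReflection a :=
  ⟨fun ⟨a, ha, h⟩ => ⟨a, ha, LinearEquiv.ext h⟩, fun ⟨a, ha, h⟩ => ⟨a, ha, h ▸ fun _ => rfl⟩⟩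

lemma rootReflection_mem_weylGroup {γ : V} (hγ : γ ∈ Φ) : rootReflection γ ∈ weylGroup Φ :=
  Subgroup.subset_closure (mem_reflections_iff.mpr ⟨γ, hγ, rfl⟩)

lemma inner_map_map_of_mem_weylGroup {w : V ≃ₗ[ℝ] V} (hw : w ∈ weylGroup Φ) (u v : V) :
    ⟪w u, w v⟫ = ⟪u, v⟫ := by
  induction hw using Subgroup.closure_induction generalizing u v with
  | mem x hx =>
    obtain ⟨γ, -, rfl⟩ := mem_reflections_iff.mp hx
    exact inner_rootReflection_rootReflection γ u v
  | one => rfl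
  | mul x y _ _ hx hy => exact (hx _ _).trans (hy u v)
  | inv x _ hx => simpa using (hx (x⁻¹ u) (x⁻¹ v)).symm

lemma mapsTo_of_mem_weylGroup (hΦ : IsIrredRootSystem Φ) {w : V ≃ₗ[ℝ] V}
    (hw : w ∈ weylGroup Φ) : Set.MapsTo w Φ Φ := by
  have hgen : ∀ x ∈ reflections Φ, Set.MapsTo x Φ Φ := fun x hx β hβ => by
    obtain ⟨γ, hγ, rfl⟩ := mem_reflections_iff.mp hx
    exact hΦ.reflect_mem γ hγ β hβ
  induction hw using Subgroup.closure_induction'' with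
  | mem x hx => exact hgen x hx
  | inv_mem x hx =>
    obtain ⟨γ, hγ, rfl⟩ := mem_reflections_iff.mp hx
    exact rootReflection_inv γ ▸ hgen _ hx
  | one => exact Set.mapsTo_id Φ
  | mul x y _ _ hx hy => exact hx.comp hy

end WeylGroup

section PositiveRoots

variable {Φ : Set V} {Δ : Finset V}

lemma eq_of_sum_smul_eq (hΔ : IsBase Φ Δ) {c d : V → ℝ}
    (h : ∑ a ∈ Δ, c a • a = ∑ a ∈ Δ, d a • a) {a : V} (ha : a ∈ Δ) : c a = d a :=
  (linearIndepOn_finset_iffₛ (v := id) (s := Δ)).mp hΔ.2.1 c d h a ha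

open Classical in
lemma sum_smul_sub_smul {a : V} (ha : a ∈ Δ) (c : V → ℝ) (k : ℝ) :
    ∑ x ∈ Δ, c x • x - k • a = ∑ x ∈ Δ, (c - Pi.single a k : V → ℝ) x • x := by
  simp [sub_smul, Pi.single_apply, ite_smul, ha]

lemma mem_posRoots_of_nonneg (hΔ : IsBase Φ Δ) {γ : V} (hγ : γ ∈ Φ) {d : V → ℝ}
    (hd : γ = ∑ a ∈ Δ, d a • a) (hnonneg : ∀ a ∈ Δ, 0 ≤ d a) : γ ∈ posRoots Φ Δ := by
  obtain ⟨c, hc, -⟩ := hΔ.2.2 γ hγ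
  have hcd : ∀ a ∈ Δ, (c a : ℝ) = d a := fun a ha => eq_of_sum_smul_eq hΔ (hc.symm.trans hd) ha
  refine ⟨hγ, fun a => (c a).toNat, hc.trans (Finset.sum_congr rfl fun a ha => ?_)⟩
  have : 0 ≤ c a := by exact_mod_cast (hcd a ha).symm ▸ hnonneg a ha
  rw [← Int.cast_natCast, Int.toNat_of_nonneg this]

lemma mem_posRoots_of_coeff_pos (hΔ : IsBase Φ Δ) {γ : V} (hγ : γ ∈ Φ) {d : V → ℝ}
    (hd : γ = ∑ a ∈ Δ, d a • a) {b : V} (hb : b ∈ Δ) (hdb : 0 < d b) : γ ∈ posRoots Φ Δ := by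
  obtain ⟨c, hc, hsign⟩ := hΔ.2.2 γ hγ
  have hcd : ∀ a ∈ Δ, (c a : ℝ) = d a := fun a ha => eq_of_sum_smul_eq hΔ (hc.symm.trans hd) ha
  refine mem_posRoots_of_nonneg hΔ hγ hd fun a ha => ?_
  rcases hsign with hpos | hneg
  · exact hcd a ha ▸ Int.cast_nonneg (hpos a ha)
  · have : (c b : ℝ) ≤ 0 := Int.cast_nonpos.mpr (hneg b hb)
    linarith [hcd b hb]

lemma IsIrredRootSystem.neg_mem (hΦ : IsIrredRootSystem Φ) {γ : V} (hγ : γ ∈ Φ) : -γ ∈ Φ := by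
  have := hΦ.reflect_mem γ hγ γ hγ
  rwa [← rootReflection_apply, rootReflection_self (hΦ.ne_zero hγ)] at this

lemma mem_posRoots_or_neg_mem_posRoots (hΦ : IsIrredRootSystem Φ) (hΔ : IsBase Φ Δ) {γ : V}
    (hγ : γ ∈ Φ) : γ ∈ posRoots Φ Δ ∨ -γ ∈ posRoots Φ Δ := by
  obtain ⟨c, hc, hpos | hneg⟩ := hΔ.2.2 γ hγ
  · exact .inl (mem_posRoots_of_nonneg hΔ hγ hc fun a ha => Int.cast_nonneg (hpos a ha))
  · refine .inr (mem_posRoots_of_nonneg hΔ (hΦ.neg_mem hγ) (d := fun a => -(c a : ℝ)) ?_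
      fun a ha => neg_nonneg.mpr (Int.cast_nonpos.mpr (hneg a ha)))
    rw [hc, ← Finset.sum_neg_distrib]
    simp [neg_smul]

lemma neg_notMem_posRoots (hΦ : IsIrredRootSystem Φ) (hΔ : IsBase Φ Δ) {γ : V}
    (hγ : γ ∈ posRoots Φ Δ) : -γ ∉ posRoots Φ Δ := by
  rintro ⟨-, d, hd⟩
  obtain ⟨hγΦ, c, hc⟩ := hγ
  have hcd : ∀ a ∈ Δ, (c a : ℝ) = -(d a : ℝ) := fun a ha =>
    eq_of_sum_smul_eq hΔ (c := fun x => (c x : ℝ)) (d := fun x => -(d x : ℝ))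
      (by simp only [neg_smul, Finset.sum_neg_distrib, ← hc, ← hd, neg_neg]) ha
  have hγ0 : γ = 0 := hc.trans <| Finset.sum_eq_zero fun a ha => by
    have : (c a : ℝ) = 0 := by
      linarith [hcd a ha, (d a).cast_nonneg (α := ℝ), (c a).cast_nonneg (α := ℝ)]
    simp [this]
  exact hΦ.ne_zero hγΦ hγ0

open Classical in
lemma simple_mem_posRoots (hΔ : IsBase Φ Δ) {a : V} (ha : a ∈ Δ) : a ∈ posRoots Φ Δ :=
  ⟨hΔ.1 ha, Pi.single a 1, by simp [Pi.single_apply, ite_smul, ha]⟩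

lemma rootReflection_mem_posRoots_of_ne (hΦ : IsIrredRootSystem Φ) (hΔ : IsBase Φ Δ) {a γ : V}
    (ha : a ∈ Δ) (hγ : γ ∈ posRoots Φ Δ) (hne : γ ≠ a) : rootReflection a γ ∈ posRoots Φ Δ := by
  obtain ⟨hγΦ, c, hc⟩ := hγ
  -- `γ` is not a multiple of `a`, and `s_a` changes only the `a`-coefficient.
  obtain ⟨b, hb, hba, hcb⟩ : ∃ b ∈ Δ, b ≠ a ∧ 0 < c b := by
    by_contra! hcon
    have hγa : γ = (c a : ℝ) • a := by
      rw [hc, Finset.sum_eq_single a (fun b hb hba => by simp [Nat.le_zero.mp (hcon b hb hba)])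
        (absurd ha)]
    rcases hΦ.reduced a (hΔ.1 ha) (c a) (hγa ▸ hγΦ) with h | h
    · exact hne (by rw [hγa, h, one_smul])
    · linarith [(c a).cast_nonneg (α := ℝ)]
  classical
  refine mem_posRoots_of_coeff_pos hΔ (hΦ.reflect_mem a (hΔ.1 ha) γ hγΦ) ?_ hb
    (d := (fun x => (c x : ℝ)) - Pi.single a (2 * ⟪a, γ⟫ / ⟪a, a⟫)) (by simpa [hba] using hcb)
  rw [← sum_smul_sub_smul ha, ← hc, rootReflection_apply]

lemma rootReflection_mem_posRoots_of_inner_nonpos (hΦ : IsIrredRootSystem Φ)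
    (hΔ : IsBase Φ Δ) {α δ : V} (hα : α ∈ posRoots Φ Δ) (hδ : δ ∈ posRoots Φ Δ) (h : ⟪α, δ⟫ ≤ 0) :
    rootReflection α δ ∈ posRoots Φ Δ := by
  obtain ⟨hαΦ, d, hd⟩ := hα
  obtain ⟨hδΦ, c, hc⟩ := hδ
  have hk : 2 * ⟪α, δ⟫ / ⟪α, α⟫ ≤ 0 := div_nonpos_of_nonpos_of_nonneg (by linarith)
    real_inner_self_nonneg
  refine mem_posRoots_of_nonneg hΔ (hΦ.reflect_mem α hαΦ δ hδΦ)
    (d := fun x => c x - 2 * ⟪α, δ⟫ / ⟪α, α⟫ * d x) ?_ fun x _ => ?_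
  · rw [rootReflection_apply]
    generalize 2 * ⟪α, δ⟫ / ⟪α, α⟫ = k
    rw [hc, hd]
    simp only [Finset.smul_sum, smul_smul, ← Finset.sum_sub_distrib, sub_smul]
  · nlinarith [(c x).cast_nonneg (α := ℝ), (d x).cast_nonneg (α := ℝ)]

end PositiveRoots

section Length

variable {Φ : Set V} {Δ : Finset V}

lemma exists_inner_pos_of_mem_posRoots (hΦ : IsIrredRootSystem Φ) {γ : V}
    (hγ : γ ∈ posRoots Φ Δ) : ∃ a ∈ Δ, 0 < ⟪a, γ⟫ := by
  obtain ⟨hγΦ, c, hc⟩ := hγ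
  by_contra! hcon
  have hγγ : ⟪γ, γ⟫ = ∑ x ∈ Δ, (c x : ℝ) * ⟪x, γ⟫ := by
    nth_rewrite 1 [hc]
    simp only [sum_inner, real_inner_smul_left]
  have : ⟪γ, γ⟫ ≤ 0 := hγγ ▸ Finset.sum_nonpos fun x hx =>
    mul_nonpos_of_nonneg_of_nonpos (by positivity) (hcon x hx)
  exact hΦ.ne_zero hγΦ (real_inner_self_nonpos.mp this)

lemma sum_coeff_rootReflection_lt (hΔ : IsBase Φ Δ) {a γ : V} (ha : a ∈ Δ)
    (hpos : 0 < ⟪a, γ⟫) {c d : V → ℕ} (hc : γ = ∑ x ∈ Δ, (c x : ℝ) • x)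
    (hd : rootReflection a γ = ∑ x ∈ Δ, (d x : ℝ) • x) : ∑ x ∈ Δ, d x < ∑ x ∈ Δ, c x := by
  classical
  set k := 2 * ⟪a, γ⟫ / ⟪a, a⟫
  have hk : 0 < k := div_pos (by linarith) (real_inner_self_pos.mpr fun h => by simp [h] at hpos)
  have hdc : ∀ x ∈ Δ, (d x : ℝ) = ((fun x => (c x : ℝ)) - Pi.single a k : V → ℝ) x :=
    fun x hx => eq_of_sum_smul_eq hΔ (c := fun x => (d x : ℝ))
      (by rw [← hd, ← sum_smul_sub_smul ha, ← hc]; rfl) hx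
  have : (∑ x ∈ Δ, d x : ℝ) = ∑ x ∈ Δ, (c x : ℝ) - k := by
    simp [Finset.sum_congr rfl hdc, Finset.sum_sub_distrib, ha]
  exact_mod_cast (show (∑ x ∈ Δ, d x : ℝ) < ∑ x ∈ Δ, (c x : ℝ) by linarith)

lemma rootReflection_mem_closure_simpleReflections (hΦ : IsIrredRootSystem Φ)
    (hΔ : IsBase Φ Δ) {γ : V} (hγ : γ ∈ posRoots Φ Δ) :
    rootReflection γ ∈ Subgroup.closure (simpleReflections Δ) := by
  obtain ⟨hγΦ, c, hc⟩ := id hγ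
  induction hn : ∑ a ∈ Δ, c a using Nat.strong_induction_on generalizing γ c with
  | _ n ih =>
    obtain ⟨a, ha, hpos⟩ := exists_inner_pos_of_mem_posRoots hΦ hγ
    have hsa : rootReflection a ∈ Subgroup.closure (simpleReflections Δ) :=
      Subgroup.subset_closure (mem_simpleReflections_iff.mpr ⟨a, ha, rfl⟩)
    by_cases hγa : γ = a
    · exact hγa ▸ hsa
    have hγ' := rootReflection_mem_posRoots_of_ne hΦ hΔ ha hγ hγa
    obtain ⟨hγ'Φ, d, hd⟩ := id hγ'
    have hconj := rootReflection_conj (inner_rootReflection_rootReflection a) (rootReflection a γ)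
    rw [rootReflection_rootReflection, rootReflection_inv] at hconj
    exact hconj ▸ mul_mem (mul_mem hsa (ih _ (hn ▸ sum_coeff_rootReflection_lt hΔ ha hpos hc hd)
      hγ' hγ'Φ d hd rfl)) hsa

lemma weylGroup_le_closure_simpleReflections (hΦ : IsIrredRootSystem Φ) (hΔ : IsBase Φ Δ) :
    weylGroup Φ ≤ Subgroup.closure (simpleReflections Δ) := by
  refine Subgroup.closure_le _ |>.mpr fun w hw => ?_
  obtain ⟨γ, hγ, rfl⟩ := mem_reflections_iff.mp hw
  rcases mem_posRoots_or_neg_mem_posRoots hΦ hΔ hγ with h | h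
  · exact rootReflection_mem_closure_simpleReflections hΦ hΔ h
  · exact rootReflection_neg γ ▸ rootReflection_mem_closure_simpleReflections hΦ hΔ h

lemma list_prod_mem_weylGroup (hΔ : IsBase Φ Δ) {L : List (V ≃ₗ[ℝ] V)}
    (hL : ∀ s ∈ L, s ∈ simpleReflections Δ) : L.prod ∈ weylGroup Φ :=
  list_prod_mem fun s hs => by
    obtain ⟨a, ha, rfl⟩ := mem_simpleReflections_iff.mp (hL s hs)
    exact rootReflection_mem_weylGroup (hΔ.1 ha)

lemma len_le_length {L : List (V ≃ₗ[ℝ] V)} (hL : ∀ s ∈ L, s ∈ simpleReflections Δ) :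
    len Δ L.prod ≤ L.length :=
  Nat.sInf_le ⟨L, hL, rfl, rfl⟩

lemma exists_word_of_mem_closure {w : V ≃ₗ[ℝ] V}
    (hw : w ∈ Subgroup.closure (simpleReflections Δ)) :
    ∃ L : List (V ≃ₗ[ℝ] V), (∀ s ∈ L, s ∈ simpleReflections Δ) ∧ L.prod = w := by
  induction hw using Subgroup.closure_induction'' with
  | mem s hs => exact ⟨[s], by simpa using hs, List.prod_singleton⟩
  | inv_mem s hs =>
    obtain ⟨a, -, rfl⟩ := mem_simpleReflections_iff.mp hs
    exact ⟨[rootReflection a], by simpa using hs, by simp [rootReflection_inv]⟩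
  | one => exact ⟨[], by simp, rfl⟩
  | mul x y _ _ hx hy =>
    obtain ⟨L, hL, rfl⟩ := hx
    obtain ⟨M, hM, rfl⟩ := hy
    exact ⟨L ++ M, fun s hs => (List.mem_append.mp hs).elim (hL s) (hM s), List.prod_append⟩

lemma exists_word_length_eq_len (hΦ : IsIrredRootSystem Φ) (hΔ : IsBase Φ Δ)
    {w : V ≃ₗ[ℝ] V} (hw : w ∈ weylGroup Φ) :
    ∃ L : List (V ≃ₗ[ℝ] V), (∀ s ∈ L, s ∈ simpleReflections Δ) ∧ L.length = len Δ w ∧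
      L.prod = w := by
  obtain ⟨L, hL, hLw⟩ :=
    exists_word_of_mem_closure (weylGroup_le_closure_simpleReflections hΦ hΔ hw)
  exact Nat.sInf_mem (s := {n | ∃ L : List (V ≃ₗ[ℝ] V),
    (∀ s ∈ L, s ∈ simpleReflections Δ) ∧ L.length = n ∧ L.prod = w}) ⟨L.length, L, hL, rfl, hLw⟩

end Length

def inversionSet (Φ : Set V) (Δ : Finset V) (w : V ≃ₗ[ℝ] V) : Set V :=
  {γ ∈ posRoots Φ Δ | -(w γ) ∈ posRoots Φ Δ}

section Inversions

variable {Φ : Set V} {Δ : Finset V}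

lemma inversionSet_finite (hΦ : IsIrredRootSystem Φ) (w : V ≃ₗ[ℝ] V) :
    (inversionSet Φ Δ w).Finite :=
  hΦ.finite.subset fun _ hγ => hγ.1.1

lemma inversionSet_rootReflection (hΦ : IsIrredRootSystem Φ) (hΔ : IsBase Φ Δ) {a : V}
    (ha : a ∈ Δ) : inversionSet Φ Δ (rootReflection a) = {a} := by
  ext γ
  refine ⟨fun ⟨hγ, hneg⟩ => ?_, fun h => ?_⟩
  · by_contra hγa
    exact neg_notMem_posRoots hΦ hΔ (rootReflection_mem_posRoots_of_ne hΦ hΔ ha hγ hγa) hneg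
  · rw [Set.mem_singleton_iff.mp h]
    refine ⟨simple_mem_posRoots hΔ ha, ?_⟩
    rw [rootReflection_self (hΦ.ne_zero (hΔ.1 ha)), neg_neg]
    exact simple_mem_posRoots hΔ ha

lemma ncard_inversionSet_mul (hΦ : IsIrredRootSystem Φ) (hΔ : IsBase Φ Δ)
    {x y : V ≃ₗ[ℝ] V} (hx : x ∈ weylGroup Φ) (hy : y ∈ weylGroup Φ)
    (h : ∀ δ ∈ inversionSet Φ Δ y, x⁻¹ δ ∈ posRoots Φ Δ) :
    (inversionSet Φ Δ (y * x)).ncard =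
      (inversionSet Φ Δ y).ncard + (inversionSet Φ Δ x).ncard := by
  have hset : inversionSet Φ Δ (y * x) = inversionSet Φ Δ x ∪ ⇑x⁻¹ '' inversionSet Φ Δ y := by
    ext γ
    constructor
    · rintro ⟨hγ, hyxγ⟩
      rcases mem_posRoots_or_neg_mem_posRoots hΦ hΔ (mapsTo_of_mem_weylGroup hΦ hx hγ.1) with
        hxγ | hxγ
      · exact .inr ⟨x γ, ⟨hxγ, hyxγ⟩, x.symm_apply_apply γ⟩
      · exact .inl ⟨hγ, hxγ⟩
    · rintro (⟨hγ, hxγ⟩ | ⟨δ, hδ, rfl⟩)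
      · refine ⟨hγ, (mem_posRoots_or_neg_mem_posRoots hΦ hΔ
          (mapsTo_of_mem_weylGroup hΦ (mul_mem hy hx) hγ.1)).resolve_left fun hyxγ => ?_⟩
        have := h (-(x γ)) ⟨hxγ, by simpa using hyxγ⟩
        exact neg_notMem_posRoots hΦ hΔ hγ (by simpa using this)
      · exact ⟨h δ hδ, by simpa using hδ.2⟩
  have hdisj : Disjoint (inversionSet Φ Δ x) (⇑x⁻¹ '' inversionSet Φ Δ y) := by
    rw [Set.disjoint_left]
    rintro _ ⟨-, hneg⟩ ⟨δ, hδ, rfl⟩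
    exact neg_notMem_posRoots hΦ hΔ hδ.1 (by simpa using hneg)
  rw [hset, Set.ncard_union_eq hdisj (inversionSet_finite hΦ x)
    ((inversionSet_finite hΦ y).image _), Set.ncard_image_of_injective _ x⁻¹.injective, add_comm]

lemma ncard_inversionSet_mul_rootReflection (hΦ : IsIrredRootSystem Φ) (hΔ : IsBase Φ Δ)
    {w : V ≃ₗ[ℝ] V} (hw : w ∈ weylGroup Φ) {a : V} (ha : a ∈ Δ) (hwa : w a ∈ posRoots Φ Δ) :
    (inversionSet Φ Δ (w * rootReflection a)).ncard = (inversionSet Φ Δ w).ncard + 1 := by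
  rw [ncard_inversionSet_mul hΦ hΔ (rootReflection_mem_weylGroup (hΔ.1 ha)) hw,
    inversionSet_rootReflection hΦ hΔ ha, Set.ncard_singleton]
  rintro δ ⟨hδ, hwδ⟩
  rw [rootReflection_inv]
  exact rootReflection_mem_posRoots_of_ne hΦ hΔ ha hδ
    (by rintro rfl; exact neg_notMem_posRoots hΦ hΔ hwa hwδ)

lemma ncard_inversionSet_eq_mul_rootReflection_add_one (hΦ : IsIrredRootSystem Φ)
    (hΔ : IsBase Φ Δ) {w : V ≃ₗ[ℝ] V} (hw : w ∈ weylGroup Φ) {a : V} (ha : a ∈ Δ)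
    (hwa : -(w a) ∈ posRoots Φ Δ) :
    (inversionSet Φ Δ w).ncard = (inversionSet Φ Δ (w * rootReflection a)).ncard + 1 := by
  have hw' : w * rootReflection a ∈ weylGroup Φ :=
    mul_mem hw (rootReflection_mem_weylGroup (hΔ.1 ha))
  have hw'a : (w * rootReflection a) a ∈ posRoots Φ Δ := by
    rwa [LinearEquiv.mul_apply, rootReflection_self (hΦ.ne_zero (hΔ.1 ha)), map_neg]
  have := ncard_inversionSet_mul_rootReflection hΦ hΔ hw' ha hw'a
  rwa [mul_assoc, rootReflection_mul_self, mul_one] at this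

lemma ncard_inversionSet_mul_rootReflection_le (hΦ : IsIrredRootSystem Φ) (hΔ : IsBase Φ Δ)
    {w : V ≃ₗ[ℝ] V} (hw : w ∈ weylGroup Φ) {a : V} (ha : a ∈ Δ) :
    (inversionSet Φ Δ (w * rootReflection a)).ncard ≤ (inversionSet Φ Δ w).ncard + 1 := by
  rcases mem_posRoots_or_neg_mem_posRoots hΦ hΔ (mapsTo_of_mem_weylGroup hΦ hw (hΔ.1 ha)) with
    hwa | hwa
  · exact (ncard_inversionSet_mul_rootReflection hΦ hΔ hw ha hwa).le
  · have := ncard_inversionSet_eq_mul_rootReflection_add_one hΦ hΔ hw ha hwa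
    omega

lemma ncard_inversionSet_prod_le_length (hΦ : IsIrredRootSystem Φ) (hΔ : IsBase Φ Δ)
    {L : List (V ≃ₗ[ℝ] V)} (hL : ∀ s ∈ L, s ∈ simpleReflections Δ) :
    (inversionSet Φ Δ L.prod).ncard ≤ L.length := by
  induction L using List.reverseRecOn with
  | nil =>
    simp only [List.prod_nil, List.length_nil, nonpos_iff_eq_zero,
      Set.ncard_eq_zero (inversionSet_finite hΦ 1)]
    exact Set.eq_empty_of_forall_notMem fun γ ⟨hγ, hneg⟩ => neg_notMem_posRoots hΦ hΔ hγ hneg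
  | append_singleton M s ih =>
    obtain ⟨a, ha, rfl⟩ := mem_simpleReflections_iff.mp (hL s (by simp))
    have hM : ∀ s ∈ M, s ∈ simpleReflections Δ := fun s hs => hL s (by simp [hs])
    rw [List.prod_append, List.prod_singleton, List.length_append, List.length_singleton]
    exact (ncard_inversionSet_mul_rootReflection_le hΦ hΔ (list_prod_mem_weylGroup hΔ hM) ha).trans
      (by have := ih hM; omega)

end Inversions

section LengthEqInversions

variable {Φ : Set V} {Δ : Finset V}

lemma len_mul_rootReflection_le (hΦ : IsIrredRootSystem Φ) (hΔ : IsBase Φ Δ)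
    {w : V ≃ₗ[ℝ] V} (hw : w ∈ weylGroup Φ) {a : V} (ha : a ∈ Δ) :
    len Δ (w * rootReflection a) ≤ len Δ w + 1 := by
  obtain ⟨L, hL, hlen, rfl⟩ := exists_word_length_eq_len hΦ hΔ hw
  have hLa : ∀ s ∈ L ++ [rootReflection a], s ∈ simpleReflections Δ :=
    List.forall_mem_append.mpr
      ⟨hL, List.forall_mem_singleton.mpr (mem_simpleReflections_iff.mpr ⟨a, ha, rfl⟩)⟩
  simpa [hlen] using len_le_length hLa

lemma exists_shorter_word (hΦ : IsIrredRootSystem Φ) (hΔ : IsBase Φ Δ) {a : V} (ha : a ∈ Δ)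
    {L : List (V ≃ₗ[ℝ] V)} (hL : ∀ s ∈ L, s ∈ simpleReflections Δ)
    (hneg : -(L.prod a) ∈ posRoots Φ Δ) :
    ∃ L' : List (V ≃ₗ[ℝ] V), (∀ s ∈ L', s ∈ simpleReflections Δ) ∧
      L'.length + 1 = L.length ∧ L'.prod = L.prod * rootReflection a := by
  induction L with
  | nil => exact absurd hneg (neg_notMem_posRoots hΦ hΔ (simple_mem_posRoots hΔ ha))
  | cons s L ih =>
    obtain ⟨hs, hL'⟩ := List.forall_mem_cons.mp hL
    obtain ⟨b, hb, rfl⟩ := mem_simpleReflections_iff.mp hs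
    have hu := list_prod_mem_weylGroup hΔ hL'
    rcases mem_posRoots_or_neg_mem_posRoots hΦ hΔ (mapsTo_of_mem_weylGroup hΦ hu (hΔ.1 ha)) with
      hpos | hneg'
    · have hba : L.prod a = b := by
        by_contra hne
        exact neg_notMem_posRoots hΦ hΔ (rootReflection_mem_posRoots_of_ne hΦ hΔ hb hpos hne) hneg
      refine ⟨L, hL', rfl, ?_⟩
      rw [List.prod_cons, ← hba, rootReflection_conj (inner_map_map_of_mem_weylGroup hu)]
      simp [mul_assoc, rootReflection_mul_self]
    · obtain ⟨M, hM, hlen, hprod⟩ := ih hL' hneg'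
      exact ⟨rootReflection b :: M, List.forall_mem_cons.mpr ⟨hs, hM⟩, by simp [hlen],
        by simp [hprod, mul_assoc]⟩

lemma eq_one_of_forall_mem_posRoots (hΦ : IsIrredRootSystem Φ) (hΔ : IsBase Φ Δ)
    {w : V ≃ₗ[ℝ] V} (hw : w ∈ weylGroup Φ) (h : ∀ a ∈ Δ, w a ∈ posRoots Φ Δ) : w = 1 := by
  obtain ⟨L, hL, hlen, rfl⟩ := exists_word_length_eq_len hΦ hΔ hw
  rcases List.eq_nil_or_concat L with rfl | ⟨M, s, rfl⟩
  · rfl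
  rw [List.concat_eq_append] at hL hlen h ⊢
  obtain ⟨hM, hs⟩ := List.forall_mem_append.mp hL
  obtain ⟨a, ha, rfl⟩ := mem_simpleReflections_iff.mp (hs s (List.mem_singleton_self s))
  have hneg : -(M.prod a) ∈ posRoots Φ Δ := by
    simpa [rootReflection_self (hΦ.ne_zero (hΔ.1 ha))] using h a ha
  obtain ⟨M', hM', hlen', hprod'⟩ := exists_shorter_word hΦ hΔ ha hM hneg
  have hshort : len Δ (M ++ [rootReflection a]).prod ≤ M'.length := by
    rw [List.prod_append, List.prod_singleton, ← hprod']
    exact len_le_length hM'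
  rw [← hlen, List.length_append, List.length_singleton] at hshort
  exact absurd hshort (by omega)

theorem len_eq_ncard_inversionSet (hΦ : IsIrredRootSystem Φ) (hΔ : IsBase Φ Δ)
    {w : V ≃ₗ[ℝ] V} (hw : w ∈ weylGroup Φ) : len Δ w = (inversionSet Φ Δ w).ncard := by
  refine le_antisymm ?_ ?_
  · induction hn : (inversionSet Φ Δ w).ncard using Nat.strong_induction_on generalizing w with
    | _ n ih =>
      by_cases h : ∀ a ∈ Δ, w a ∈ posRoots Φ Δ
      · rw [eq_one_of_forall_mem_posRoots hΦ hΔ hw h]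
        exact (len_le_length (L := []) (by simp)).trans (Nat.zero_le n)
      obtain ⟨a, ha, hwa⟩ : ∃ a ∈ Δ, w a ∉ posRoots Φ Δ := by simpa using h
      have hwa' := (mem_posRoots_or_neg_mem_posRoots hΦ hΔ
        (mapsTo_of_mem_weylGroup hΦ hw (hΔ.1 ha))).resolve_left hwa
      have hw' : w * rootReflection a ∈ weylGroup Φ :=
        mul_mem hw (rootReflection_mem_weylGroup (hΔ.1 ha))
      have hcount := ncard_inversionSet_eq_mul_rootReflection_add_one hΦ hΔ hw ha hwa'
      have hlen := len_mul_rootReflection_le hΦ hΔ hw' ha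
      rw [mul_assoc, rootReflection_mul_self, mul_one] at hlen
      have := ih _ (by omega) hw' rfl
      omega
  · obtain ⟨L, hL, hlen, rfl⟩ := exists_word_length_eq_len hΦ hΔ hw
    exact hlen ▸ ncard_inversionSet_prod_le_length hΦ hΔ hL

end LengthEqInversions

section MinCosetReps

variable {Φ : Set V} {Δ : Finset V} {t : V}

lemma inner_nonneg_of_isHighestRoot (hΦ : IsIrredRootSystem Φ) (hΔ : IsBase Φ Δ)
    (ht : IsHighestRoot Φ Δ t) {a : V} (ha : a ∈ Δ) : 0 ≤ ⟪t, a⟫ := by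
  classical
  by_contra! hta
  obtain ⟨c, hc⟩ := ht.2 _ (hΦ.reflect_mem a (hΔ.1 ha) t ht.1)
  have hk : 2 * ⟪a, t⟫ / ⟪a, a⟫ < 0 := div_neg_of_neg_of_pos (by rw [real_inner_comm]; linarith)
    (real_inner_self_pos.mpr (hΦ.ne_zero (hΔ.1 ha)))
  have hca := eq_of_sum_smul_eq hΔ (d := Pi.single a (2 * ⟪a, t⟫ / ⟪a, a⟫))
    (c := fun x => (c x : ℝ)) (by simp [← hc, Pi.single_apply, ite_smul, ha]) ha
  simp only [Pi.single_eq_same] at hca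
  linarith [(c a).cast_nonneg (α := ℝ)]

lemma inner_nonneg_of_mem_posRoots (hdom : ∀ a ∈ Δ, 0 ≤ ⟪t, a⟫) {γ : V}
    (hγ : γ ∈ posRoots Φ Δ) : 0 ≤ ⟪t, γ⟫ := by
  obtain ⟨-, c, rfl⟩ := hγ
  simp only [inner_sum, real_inner_smul_right]
  exact Finset.sum_nonneg fun a ha => mul_nonneg (by positivity) (hdom a ha)

lemma apply_mem_posRoots_of_inner_eq_zero (hdom : ∀ a ∈ Δ, 0 ≤ ⟪t, a⟫) {w : V ≃ₗ[ℝ] V}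
    (hw : w ∈ minCosetReps Φ Δ t) {γ : V} (hγ : γ ∈ posRoots Φ Δ) (hγt : ⟪t, γ⟫ = 0) :
    w γ ∈ posRoots Φ Δ := by
  obtain ⟨hγΦ, c, hc⟩ := hγ
  refine hw.2 γ hγΦ ⟨c, fun a ha hta => ?_, hc⟩
  simp only [hc, inner_sum, real_inner_smul_right] at hγt
  have := (Finset.sum_eq_zero_iff_of_nonneg fun x hx =>
    mul_nonneg (by positivity) (hdom x hx)).mp hγt a ha
  exact_mod_cast (mul_eq_zero.mp this).resolve_right hta

lemma minCosetReps_injOn (hΦ : IsIrredRootSystem Φ) (hΔ : IsBase Φ Δ)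
    (hdom : ∀ a ∈ Δ, 0 ≤ ⟪t, a⟫) : Set.InjOn (fun w => w t) (minCosetReps Φ Δ t) := by
  intro w₁ h₁ w₂ h₂ (heq : w₁ t = w₂ t)
  have hu : w₁⁻¹ * w₂ ∈ weylGroup Φ := mul_mem (inv_mem h₁.1) h₂.1
  have hut : (w₁⁻¹ * w₂) t = t := by simp [← heq]
  by_contra hne
  obtain ⟨a, ha, hua⟩ : ∃ a ∈ Δ, (w₁⁻¹ * w₂) a ∉ posRoots Φ Δ := by
    by_contra! h
    exact hne (inv_mul_eq_one.mp (eq_one_of_forall_mem_posRoots hΦ hΔ hu h))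
  have hua' := (mem_posRoots_or_neg_mem_posRoots hΦ hΔ
    (mapsTo_of_mem_weylGroup hΦ hu (hΔ.1 ha))).resolve_left hua
  have hinner : ⟪t, (w₁⁻¹ * w₂) a⟫ = ⟪t, a⟫ := by
    conv_lhs => rw [← hut]
    exact inner_map_map_of_mem_weylGroup hu t a
  have hta : ⟪t, a⟫ = 0 := by
    have := inner_nonneg_of_mem_posRoots hdom hua'
    rw [inner_neg_right, hinner] at this
    linarith [hdom a ha]
  have hpos₂ := apply_mem_posRoots_of_inner_eq_zero hdom h₂ (simple_mem_posRoots hΔ ha) hta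
  have hpos₁ := apply_mem_posRoots_of_inner_eq_zero hdom h₁ hua'
    (by rw [inner_neg_right, hinner, hta, neg_zero])
  exact neg_notMem_posRoots hΦ hΔ hpos₂ (by simpa using hpos₁)

lemma rootReflection_mul_mem_minCosetReps {x : V ≃ₗ[ℝ] V} (hx : x ∈ minCosetReps Φ Δ t)
    {α : V} (hα : α ∈ Φ) (hxt : x t = α) : rootReflection α * x ∈ minCosetReps Φ Δ t := by
  refine ⟨mul_mem (rootReflection_mem_weylGroup hα) hx.1, fun γ hγ hsupp => ?_⟩
  have hγt : ⟪t, γ⟫ = 0 := by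
    obtain ⟨c, hc0, rfl⟩ := hsupp
    simp only [inner_sum, real_inner_smul_right]
    refine Finset.sum_eq_zero fun a ha => ?_
    by_cases hta : ⟪t, a⟫ = 0
    · rw [hta, mul_zero]
    · simp [hc0 a ha hta]
  rw [LinearEquiv.mul_apply, rootReflection_of_inner_eq_zero
    (by rw [← hxt, inner_map_map_of_mem_weylGroup hx.1, hγt])]
  exact hx.2 γ hγ hsupp

lemma len_rootReflection_mul (hΦ : IsIrredRootSystem Φ) (hΔ : IsBase Φ Δ)
    (hdom : ∀ a ∈ Δ, 0 ≤ ⟪t, a⟫) {x : V ≃ₗ[ℝ] V} (hx : x ∈ weylGroup Φ) {α : V}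
    (hα : α ∈ posRoots Φ Δ) (hxt : x t = α) :
    len Δ (rootReflection α * x) = len Δ (rootReflection α) + len Δ x := by
  have hsα := rootReflection_mem_weylGroup hα.1
  rw [len_eq_ncard_inversionSet hΦ hΔ hx, len_eq_ncard_inversionSet hΦ hΔ hsα,
    len_eq_ncard_inversionSet hΦ hΔ (mul_mem hsα hx), ncard_inversionSet_mul hΦ hΔ hx hsα]
  rintro δ ⟨hδ, hsδ⟩
  by_contra hxδ
  have hxδ' := (mem_posRoots_or_neg_mem_posRoots hΦ hΔ
    (mapsTo_of_mem_weylGroup hΦ (inv_mem hx) hδ.1)).resolve_left hxδ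
  have hαδ : ⟪α, δ⟫ = ⟪t, x⁻¹ δ⟫ := by
    rw [← hxt, ← inner_map_map_of_mem_weylGroup hx t (x⁻¹ δ), ← LinearEquiv.mul_apply,
      mul_inv_cancel, LinearEquiv.coe_one, id]
  have := inner_nonneg_of_mem_posRoots hdom hxδ'
  rw [inner_neg_right, neg_nonneg, ← hαδ] at this
  exact neg_notMem_posRoots hΦ hΔ
    (rootReflection_mem_posRoots_of_inner_nonpos hΦ hΔ hα hδ this) hsδ

end MinCosetReps

theorem minCosetRep_neg_eq_reflection_mul_general (Φ : Set V) (hΦ : IsIrredRootSystem Φ)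
    (Δ : Finset V) (hΔ : IsBase Φ Δ)
    (t : V) (ht : IsHighestRoot Φ Δ t)
    (α : V) (hα : α ∈ posRoots Φ Δ)
    (s : V ≃ₗ[ℝ] V) (hs : ∀ v, s v = v - (2 * ⟪α, v⟫ / ⟪α, α⟫) • α)
    (xα : V ≃ₗ[ℝ] V) (hxα : xα ∈ minCosetReps Φ Δ t) (hxαt : xα t = α)
    (xnα : V ≃ₗ[ℝ] V) (hxnα : xnα ∈ minCosetReps Φ Δ t) (hxnαt : xnα t = -α) :
    xnα = s * xα ∧ len Δ xnα = len Δ s + len Δ xα := by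
  have hsα : s = rootReflection α := LinearEquiv.ext hs
  have hdom : ∀ a ∈ Δ, 0 ≤ ⟪t, a⟫ := fun a ha => inner_nonneg_of_isHighestRoot hΦ hΔ ht ha
  have hxnα_eq : xnα = s * xα := by
    refine minCosetReps_injOn hΦ hΔ hdom hxnα
      (hsα ▸ rootReflection_mul_mem_minCosetReps hxα hα.1 hxαt) ?_
    simp [hxnαt, hxαt, hsα, rootReflection_self (hΦ.ne_zero hα.1)]
  refine ⟨hxnα_eq, ?_⟩
  rw [hxnα_eq, hsα]
  exact len_rootReflection_mul hΦ hΔ hdom hxα.1 hα hxαt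

/-- For a positive long root `α`, with `x_α` (resp. `x_{−α}`) the
minimal coset representative sending the highest root `α̃` to `α` (resp. `−α`), one has
`x_{−α} = s_α x_α` and `l(x_{−α}) = l(s_α) + l(x_α)`. -/
theorem minCosetRep_neg_eq_reflection_mul (Φ : Set V) (hΦ : IsIrredRootSystem Φ)
    (Δ : Finset V) (hΔ : IsBase Φ Δ)
    (r : ℝ) (hr : IsGreatest {x : ℝ | ∃ α ∈ Φ, x = ⟪α, α⟫} r)
    (t : V) (ht : IsHighestRoot Φ Δ t)
    (α : V) (hα : α ∈ posRoots Φ Δ) (hαlg : ⟪α, α⟫ = r)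
    (s : V ≃ₗ[ℝ] V) (hs : ∀ v, s v = v - (2 * ⟪α, v⟫ / ⟪α, α⟫) • α)
    (xα : V ≃ₗ[ℝ] V) (hxα : xα ∈ minCosetReps Φ Δ t) (hxαt : xα t = α)
    (xnα : V ≃ₗ[ℝ] V) (hxnα : xnα ∈ minCosetReps Φ Δ t) (hxnαt : xnα t = -α) :
    xnα = s * xα ∧ len Δ xnα = len Δ s + len Δ xα :=
  minCosetRep_neg_eq_reflection_mul_general Φ hΦ Δ hΔ t ht α hα s hs xα hxα hxαt xnα hxnα hxnαt
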